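/- arXiv:1708.01157 — 7 statements merged into one kernel-verified Lean document; each statement's English description precedes it below -/
import Mathlib

section
/- Let $A$ and $B$ be real skew-symmetric $n \times n$ matrices ($n \geq 1$). Then the Frobenius norm of their commutator satisfies $\|AB - BA\|_F \leq \|A\|_F \, \|B\|_F$. (Equivalently, in the inner product $\langle M, N\rangle = -\tfrac{1}{2}\operatorname{tr}(MN)$ on skew-symmetric matrices, $|[A,B]| \leq \sqrt{2}\,|A|\,|B|$, i.e. the constant $\gamma_0$ for $\mathfrak{so}(n)$ satisfies $\gamma_0 \leq \sqrt{2}$.) -/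
/-!
Complexify: `H = i A` is Hermitian with `Hᵀ = -H`. Conjugating by a unitary eigenbasis of `H`
(eigenvalues `d`) turns `B` into `b` and `[H, B]` into the matrix with entries `(d j - d k) b j k`,
so it suffices that `(d j - d k) ^ 2 ≤ ∑ l, d l ^ 2` whenever `b j k ≠ 0`. Since `Hᵀ = -H`, the
eigenvalues `x` and `-x` have equal multiplicities, and counting the eigenvalues `± d j`, `± d k`
gives the bound, except when `d k = -d j` with `d j` simple. In that case the eigenvector for `d k`
is a multiple of the conjugate of the eigenvector `u` for `d j`, so `b j k` is a multiple of
`ū ⬝ᵥ B *ᵥ ū`, which vanishes because `B` is skew-symmetric.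
-/

open Matrix

noncomputable def frobNorm {n : ℕ} (M : Matrix (Fin n) (Fin n) ℝ) : ℝ :=
  Real.sqrt (Matrix.trace (Mᵀ * M))

open Finset

attribute [local instance] Matrix.frobeniusNormedAddCommGroup Matrix.frobeniusNormedSpace

section SymmetricSpectrum

variable {ι : Type*} [Fintype ι] {d : ι → ℝ}

lemma sum_filter_sq_eq_card_mul (t : ℝ) :
    ∑ l with d l ^ 2 = t, d l ^ 2 = #{l | d l ^ 2 = t} * t := by
  rw [sum_congr rfl fun l hl => (mem_filter.1 hl).2, sum_const, nsmul_eq_mul]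

lemma card_mul_le_sum_sq (t : ℝ) : #{l | d l ^ 2 = t} * t ≤ ∑ l, d l ^ 2 := by
  rw [← sum_filter_sq_eq_card_mul]
  exact sum_le_sum_of_subset_of_nonneg (subset_univ _) fun l _ _ => sq_nonneg _

lemma card_mul_add_card_mul_le_sum_sq {s t : ℝ} (hst : s ≠ t) :
    #{l | d l ^ 2 = s} * s + #{l | d l ^ 2 = t} * t ≤ ∑ l, d l ^ 2 := by
  rw [← sum_filter_sq_eq_card_mul, ← sum_filter_sq_eq_card_mul,
    ← sum_filter_add_sum_filter_not univ (fun l => d l ^ 2 = s)]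
  refine add_le_add le_rfl (sum_le_sum_of_subset_of_nonneg ?_ fun _ _ _ => sq_nonneg _)
  intro l
  simp only [mem_filter, mem_univ, true_and]
  rintro rfl
  exact hst.symm

variable (hd : ∀ x, #{l | d l = -x} = #{l | d l = x})
include hd

lemma two_mul_card_le_card_sq_eq {j : ι} (hj : d j ≠ 0) :
    2 * #{l | d l = d j} ≤ #{l | d l ^ 2 = d j ^ 2} := by
  classical
  have hdisj : Disjoint (univ.filter fun l => d l = d j) (univ.filter fun l => d l = -d j) := by
    rw [disjoint_filter]
    intro l _ h h'
    exact hj (by linarith)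
  calc 2 * #{l | d l = d j}
      = #((univ.filter fun l => d l = d j) ∪ univ.filter fun l => d l = -d j) := by
        rw [card_union_of_disjoint hdisj, hd]; ring
    _ ≤ #{l | d l ^ 2 = d j ^ 2} := by
        refine card_le_card fun l hl => ?_
        simp only [mem_union, mem_filter, mem_univ, true_and] at hl ⊢
        rcases hl with h | h <;> simp [h]

lemma two_mul_sq_le_card_mul_sq (j : ι) : 2 * d j ^ 2 ≤ #{l | d l ^ 2 = d j ^ 2} * d j ^ 2 := by
  rcases eq_or_ne (d j) 0 with hj | hj
  · simp [hj]
  have hj1 : 1 ≤ #{l | d l = d j} := card_pos.2 ⟨j, by simp⟩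
  have h2 : (2 : ℝ) ≤ #{l | d l ^ 2 = d j ^ 2} := by
    exact_mod_cast (two_mul_card_le_card_sq_eq hd hj).trans' (by omega)
  nlinarith [sq_nonneg (d j)]

theorem sq_sub_le_sum_sq {j k : ι} (h : d k = -d j → ∃ l ≠ j, d l = d j) :
    (d j - d k) ^ 2 ≤ ∑ l, d l ^ 2 := by
  by_cases hjk : d j ^ 2 = d k ^ 2
  · rcases sq_eq_sq_iff_eq_or_eq_neg.1 hjk.symm with hkj | hkj
    · simpa [hkj] using sum_nonneg fun l _ => sq_nonneg (d l)
    rcases eq_or_ne (d j) 0 with hj | hj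
    · simpa [hkj, hj] using sum_nonneg fun l _ => sq_nonneg (d l)
    obtain ⟨l, hlj, hl⟩ := h hkj
    have hj2 : 2 ≤ #{l | d l = d j} := one_lt_card.2 ⟨l, by simpa, j, by simp, hlj⟩
    have h4 : (4 : ℝ) ≤ #{l | d l ^ 2 = d j ^ 2} := by
      exact_mod_cast (two_mul_card_le_card_sq_eq hd hj).trans' (by omega)
    rw [hkj]
    nlinarith [card_mul_le_sum_sq (d := d) (d j ^ 2), sq_nonneg (d j)]
  · nlinarith [card_mul_add_card_mul_le_sum_sq (d := d) hjk, two_mul_sq_le_card_mul_sq hd j,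
      two_mul_sq_le_card_mul_sq hd k, sq_nonneg (d j + d k)]

theorem sum_sq_sub_mul_le {w : ι → ι → ℝ} (hw : ∀ j k, 0 ≤ w j k)
    (hw₀ : ∀ j k, d k = -d j → (∀ l, d l = d j → l = j) → w j k = 0) :
    ∑ j, ∑ k, (d j - d k) ^ 2 * w j k ≤ (∑ l, d l ^ 2) * ∑ j, ∑ k, w j k := by
  simp_rw [mul_sum]
  refine sum_le_sum fun j _ => sum_le_sum fun k _ => ?_
  by_cases h : d k = -d j → ∃ l ≠ j, d l = d j
  · exact mul_le_mul_of_nonneg_right (sq_sub_le_sum_sq hd h) (hw j k)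
  · push Not at h
    simp [hw₀ j k h.1 fun l hl => not_imp_not.1 (h.2 l) hl]

end SymmetricSpectrum

namespace Matrix

variable {𝕜 : Type*} [RCLike 𝕜] {m n : Type*} [Fintype m] [Fintype n]

lemma frobenius_norm_sq {α : Type*} [NormedAddCommGroup α] (X : Matrix m n α) :
    ‖X‖ ^ 2 = ∑ i, ∑ j, ‖X i j‖ ^ 2 := by
  rw [frobenius_norm_def, ← Real.sqrt_eq_rpow, Real.sq_sqrt (by positivity)]
  simp only [Real.rpow_two]

lemma frobenius_norm_sq_eq_re_trace (X : Matrix m n 𝕜) :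
    ‖X‖ ^ 2 = RCLike.re (trace (Xᴴ * X)) := by
  rw [frobenius_norm_sq, sum_comm]
  simp only [trace, Matrix.diag, mul_apply, conjTranspose_apply, RCLike.star_def, RCLike.conj_mul,
    map_sum]
  norm_cast

lemma frobenius_norm_unitary_mul [DecidableEq m] {U : Matrix m m 𝕜} (hU : U ∈ unitaryGroup m 𝕜)
    (X : Matrix m n 𝕜) : ‖U * X‖ = ‖X‖ := by
  rw [← sq_eq_sq₀ (norm_nonneg _) (norm_nonneg _), frobenius_norm_sq_eq_re_trace,
    frobenius_norm_sq_eq_re_trace, conjTranspose_mul, Matrix.mul_assoc, ← Matrix.mul_assoc Uᴴ,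
    ← star_eq_conjTranspose, (mem_unitaryGroup_iff').1 hU, Matrix.one_mul]

lemma frobenius_norm_mul_unitary [DecidableEq m] {U : Matrix m m 𝕜} (hU : U ∈ unitaryGroup m 𝕜)
    (X : Matrix n m 𝕜) : ‖X * U‖ = ‖X‖ := by
  rw [← frobenius_norm_conjTranspose, conjTranspose_mul, ← star_eq_conjTranspose,
    frobenius_norm_unitary_mul (Unitary.star_mem hU), frobenius_norm_conjTranspose]

lemma dotProduct_mulVec_self_eq_zero {R : Type*} [CommRing R] [IsAddTorsionFree R]
    {B : Matrix n n R} (hB : Bᵀ = -B) (v : n → R) : v ⬝ᵥ (B *ᵥ v) = 0 := by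
  refine self_eq_neg.1 ?_
  conv_lhs => rw [dotProduct_mulVec, ← mulVec_transpose, hB, neg_mulVec, dotProduct_comm,
    dotProduct_neg]

lemma IsHermitian.mulVec_star {H : Matrix n n 𝕜} (hH : H.IsHermitian) (hHT : Hᵀ = -H)
    {v : n → 𝕜} {t : ℝ} (hv : H *ᵥ v = (t : 𝕜) • v) : H *ᵥ star v = (-t : 𝕜) • star v := by
  have h := congrArg star hv
  rw [star_mulVec, hH.eq, ← mulVec_transpose, hHT, neg_mulVec, star_smul, RCLike.star_def,
    RCLike.conj_ofReal] at h
  rw [neg_smul, ← h, neg_neg]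

end Matrix

namespace Matrix.IsHermitian

variable {𝕜 : Type*} [RCLike 𝕜] {n : Type*} [Fintype n] [DecidableEq n]
  {H : Matrix n n 𝕜} (hH : H.IsHermitian)
include hH

local notation "U" => (hH.eigenvectorUnitary : Matrix n n 𝕜)

lemma star_eigenvectorUnitary_mul_mul :
    star U * H * U = diagonal (RCLike.ofReal ∘ hH.eigenvalues) := by
  rw [← Unitary.conjStarAlgAut_star_apply (S := 𝕜), hH.conjStarAlgAut_star_eigenvectorUnitary]

lemma norm_star_eigenvectorUnitary_mul_mul (X : Matrix n n 𝕜) : ‖star U * X * U‖ = ‖X‖ := by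
  rw [frobenius_norm_mul_unitary hH.eigenvectorUnitary.2,
    frobenius_norm_unitary_mul (Unitary.star_mem hH.eigenvectorUnitary.2)]

lemma star_eigenvectorUnitary_mul_commutator_mul_apply (B : Matrix n n 𝕜) (j k : n) :
    (star U * (H * B - B * H) * U) j k =
      (hH.eigenvalues j - hH.eigenvalues k) * (star U * B * U) j k := by
  have hmul : ∀ X Y : Matrix n n 𝕜,
      star U * (X * Y) * U = (star U * X * U) * (star U * Y * U) := fun X Y => by
    simp only [← Unitary.conjStarAlgAut_star_apply (S := 𝕜) (R := Matrix n n 𝕜), map_mul]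
  rw [Matrix.mul_sub, Matrix.sub_mul, hmul, hmul, star_eigenvectorUnitary_mul_mul, sub_apply,
    diagonal_mul, mul_diagonal]
  simp only [Function.comp_apply]
  ring

lemma norm_sq_eq_sum_eigenvalues_sq : ‖H‖ ^ 2 = ∑ j, hH.eigenvalues j ^ 2 := by
  rw [← hH.norm_star_eigenvectorUnitary_mul_mul, star_eigenvectorUnitary_mul_mul,
    frobenius_norm_diagonal, EuclideanSpace.norm_sq_eq]
  simp

lemma norm_sq_eq_sum_norm_star_eigenvectorUnitary_mul_mul_apply_sq (B : Matrix n n 𝕜) :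
    ‖B‖ ^ 2 = ∑ j, ∑ k, ‖(star U * B * U) j k‖ ^ 2 := by
  rw [← hH.norm_star_eigenvectorUnitary_mul_mul B, frobenius_norm_sq]

lemma norm_commutator_sq_eq (B : Matrix n n 𝕜) :
    ‖H * B - B * H‖ ^ 2 =
      ∑ j, ∑ k, (hH.eigenvalues j - hH.eigenvalues k) ^ 2 * ‖(star U * B * U) j k‖ ^ 2 := by
  rw [hH.norm_sq_eq_sum_norm_star_eigenvectorUnitary_mul_mul_apply_sq]
  simp_rw [star_eigenvectorUnitary_mul_commutator_mul_apply, norm_mul, mul_pow]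
  norm_cast
  simp

open Polynomial in
lemma charpoly_neg_eq : (-H).charpoly = ∏ i, (X - C (-hH.eigenvalues i : 𝕜)) := by
  conv_lhs => rw [hH.spectral_theorem, ← map_neg, Unitary.conjStarAlgAut_apply, charpoly_mul_comm,
    ← Matrix.mul_assoc]
  rw [Unitary.coe_star_mul_self, Matrix.one_mul, diagonal_neg, charpoly_diagonal]
  simp

lemma exists_eq_smul_eigenvectorBasis {j : n}
    (hj : ∀ l, hH.eigenvalues l = hH.eigenvalues j → l = j)
    {v : n → 𝕜} (hv : H *ᵥ v = (hH.eigenvalues j : 𝕜) • v) :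
    ∃ c : 𝕜, v = c • ⇑(hH.eigenvectorBasis j) := by
  set y := star U *ᵥ v
  have hUU : U * star U = 1 := Unitary.coe_mul_star_self _
  have hDy : diagonal (RCLike.ofReal ∘ hH.eigenvalues) *ᵥ y = (hH.eigenvalues j : 𝕜) • y := by
    rw [← hH.star_eigenvectorUnitary_mul_mul, mulVec_mulVec, Matrix.mul_assoc, hUU,
      Matrix.mul_one, ← mulVec_mulVec, hv, mulVec_smul]
  have hy : y = y j • Pi.single j 1 := by
    ext l
    rcases eq_or_ne l j with rfl | hl
    · simp
    have h := congrFun hDy l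
    simp only [mulVec_diagonal, Function.comp_apply, Pi.smul_apply, smul_eq_mul] at h
    have hne : (hH.eigenvalues l : 𝕜) ≠ hH.eigenvalues j := by
      exact_mod_cast fun h' => hl (hj l h')
    simp [hl, (mul_eq_mul_right_iff.1 h).resolve_left hne]
  refine ⟨y j, ?_⟩
  rw [← hH.eigenvectorUnitary_mulVec, ← mulVec_smul, ← hy, mulVec_mulVec, hUU, one_mulVec]

variable (hHT : Hᵀ = -H)
include hHT

open Polynomial in
lemma card_eigenvalues_eq_neg (x : ℝ) :
    #{l | hH.eigenvalues l = -x} = #{l | hH.eigenvalues l = x} := by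
  have hroots : (-H).charpoly.roots = H.charpoly.roots := by rw [← hHT, charpoly_transpose]
  rw [hH.charpoly_neg_eq, roots_prod _ _ (prod_ne_zero_iff.2 fun i _ => X_sub_C_ne_zero _),
    hH.roots_charpoly_eq_eigenvalues] at hroots
  simp only [roots_X_sub_C, Multiset.bind_singleton, Function.comp_def] at hroots
  have := congrArg (Multiset.count (x : 𝕜)) hroots
  simp only [Multiset.count_map, ← Finset.filter_val, Finset.card_val, ← RCLike.ofReal_neg,
    RCLike.ofReal_inj] at this
  convert this using 2 <;> ext l <;> simp only [mem_filter, mem_univ, true_and] <;>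
    constructor <;> intro <;> linarith

lemma star_eigenvectorUnitary_mul_mul_apply_eq_zero {B : Matrix n n 𝕜} (hB : Bᵀ = -B) {j k : n}
    (hjk : hH.eigenvalues k = -hH.eigenvalues j)
    (hj : ∀ l, hH.eigenvalues l = hH.eigenvalues j → l = j) :
    (star U * B * U) j k = 0 := by
  have hk := hH.mulVec_star hHT (v := ⇑(hH.eigenvectorBasis k)) (by
    rw [hH.mulVec_eigenvectorBasis, RCLike.real_smul_eq_coe_smul (K := 𝕜)])
  rw [hjk, RCLike.ofReal_neg, neg_neg] at hk
  obtain ⟨c, hc⟩ := hH.exists_eq_smul_eigenvectorBasis hj hk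
  have huk : ⇑(hH.eigenvectorBasis k) = star c • star ⇑(hH.eigenvectorBasis j) := by
    rw [← star_smul, ← hc, star_star]
  have hrow : (star U) j = star ⇑(hH.eigenvectorBasis j) := funext fun i => by simp [star_apply]
  rw [mul_mul_apply, eigenvectorUnitary_transpose_apply, huk, mulVec_smul, dotProduct_smul, hrow,
    dotProduct_mulVec_self_eq_zero hB, smul_zero]

theorem norm_commutator_le {B : Matrix n n 𝕜} (hB : Bᵀ = -B) : ‖H * B - B * H‖ ≤ ‖H‖ * ‖B‖ := by
  rw [← sq_le_sq₀ (norm_nonneg _) (by positivity), mul_pow, hH.norm_commutator_sq_eq,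
    hH.norm_sq_eq_sum_eigenvalues_sq, hH.norm_sq_eq_sum_norm_star_eigenvectorUnitary_mul_mul_apply_sq]
  refine sum_sq_sub_mul_le (hH.card_eigenvalues_eq_neg hHT) (fun _ _ => by positivity) ?_
  intro j k hjk hj
  rw [hH.star_eigenvectorUnitary_mul_mul_apply_eq_zero hHT hB hjk hj, norm_zero, sq, zero_mul]

end Matrix.IsHermitian

lemma frobNorm_eq_norm_map {n : ℕ} (M : Matrix (Fin n) (Fin n) ℝ) :
    frobNorm M = ‖M.map Complex.ofRealHom‖ := by
  rw [frobenius_norm_map_eq M (⇑Complex.ofRealHom) Complex.norm_real, frobNorm, ← Real.sqrt_sq (norm_nonneg M),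
    frobenius_norm_sq_eq_re_trace, conjTranspose_eq_transpose_of_trivial, RCLike.re_to_real]

theorem skew_commutator_frobenius_le_general (n : ℕ)
    (A B : Matrix (Fin n) (Fin n) ℝ) (hA : Aᵀ = -A) (hB : Bᵀ = -B) :
    frobNorm (A * B - B * A) ≤ frobNorm A * frobNorm B := by
  have hH : (Complex.I • A.map Complex.ofRealHom).IsHermitian := by
    rw [IsHermitian, conjTranspose_smul,
      ← conjTranspose_map (⇑Complex.ofRealHom) fun _ => (Complex.conj_ofReal _).symm,
      conjTranspose_eq_transpose_of_trivial, hA, Matrix.map_neg _ (map_neg _), smul_neg,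
      ← neg_smul, Complex.star_def, Complex.conj_I, neg_neg]
  have hHT : (Complex.I • A.map Complex.ofRealHom)ᵀ = -(Complex.I • A.map Complex.ofRealHom) := by
    rw [transpose_smul, ← transpose_map, hA, Matrix.map_neg _ (map_neg _), smul_neg]
  have hBT : (B.map Complex.ofRealHom)ᵀ = -B.map Complex.ofRealHom := by
    rw [← transpose_map, hB, Matrix.map_neg _ (map_neg _)]
  have key := hH.norm_commutator_le hHT hBT
  rwa [smul_mul_assoc, mul_smul_comm, ← smul_sub, ← Matrix.map_mul, ← Matrix.map_mul,
    ← Matrix.map_sub _ (map_sub Complex.ofRealHom), norm_smul, norm_smul, Complex.norm_I, one_mul, one_mul,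
    ← frobNorm_eq_norm_map, ← frobNorm_eq_norm_map, ← frobNorm_eq_norm_map] at key

/-- Bourguignon–Lawson commutator estimate: for skew-symmetric matrices,
`‖AB - BA‖_F ≤ ‖A‖_F ‖B‖_F`. -/
theorem skew_commutator_frobenius_le (n : ℕ) (hn : 1 ≤ n)
    (A B : Matrix (Fin n) (Fin n) ℝ) (hA : Aᵀ = -A) (hB : Bᵀ = -B) :
    frobNorm (A * B - B * A) ≤ frobNorm A * frobNorm B :=
  skew_commutator_frobenius_le_general n A B hA hB
end

section
/- Fix $n \geq 4$ and real numbers $t, s$. Let $A$ be the real skew-symmetric $n \times n$ matrix whose only nonzero entries are $A_{12} = A_{34} = t$, $A_{21} = A_{43} = -t$, and let $B$ be the real skew-symmetric $n \times n$ matrix whose only nonzero entries are $B_{13} = -s$, $B_{31} = s$, $B_{24} = s$, $B_{42} = -s$. Then $\|AB - BA\|_F = \|A\|_F \, \|B\|_F$. In particular, for $n \geq 4$ the constant $\sqrt{2}$ in the estimate $|[A,B]| \leq \sqrt{2}|A||B|$ (norms induced by $\langle M,N\rangle = -\tfrac12 \operatorname{tr}(MN)$) is attained, so $\gamma_0(\mathfrak{so}(n))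 = \sqrt{2}$ for $n \geq 4$. -/
open Matrix

lemma sum4 {α : Type*} [DecidableEq α] [Fintype α] (f : α → ℝ) (a b c d : α)
    (hab : a ≠ b) (hac : a ≠ c) (had : a ≠ d) (hbc : b ≠ c) (hbd : b ≠ d) (hcd : c ≠ d)
    (hz : ∀ x, x ≠ a → x ≠ b → x ≠ c → x ≠ d → f x = 0) :
    ∑ x, f x = f a + f b + f c + f d := by
  rw [← Finset.sum_subset (Finset.subset_univ ({a, b, c, d} : Finset α))]
  · rw [Finset.sum_insert (by simp [hab, hac, had]),
        Finset.sum_insert (by simp [hbc, hbd]),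
        Finset.sum_insert (by simp [hcd]), Finset.sum_singleton, add_assoc, add_assoc]
  · intro x _ hx
    simp only [Finset.mem_insert, Finset.mem_singleton, not_or] at hx
    exact hz x hx.1 hx.2.1 hx.2.2.1 hx.2.2.2

lemma trace_eq_sum_sq {n : ℕ} (M : Matrix (Fin n) (Fin n) ℝ) :
    Matrix.trace (Mᵀ * M) = ∑ p : Fin n × Fin n, (M p.1 p.2) ^ 2 := by
  rw [Matrix.trace, Fintype.sum_prod_type]
  simp only [Matrix.diag_apply, Matrix.mul_apply, Matrix.transpose_apply, sq]
  rw [Finset.sum_comm]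

set_option maxHeartbeats 1000000

/-- The Pauli-type pair of skew-symmetric matrices (equation (2.5) of the paper)
achieves equality in the Bourguignon–Lawson commutator estimate, so
`γ₀(𝔰𝔬(n)) = √2` for `n ≥ 4`. -/
theorem pauli_pair_commutator_frobenius_eq (n : ℕ) (hn : 4 ≤ n) (t s : ℝ)
    (A B : Matrix (Fin n) (Fin n) ℝ)
    (hA : ∀ i j : Fin n, A i j =
      if ((i : ℕ) = 0 ∧ (j : ℕ) = 1) ∨ ((i : ℕ) = 2 ∧ (j : ℕ) = 3) then t
      else if ((i : ℕ) = 1 ∧ (j : ℕ) = 0) ∨ ((i : ℕ) = 3 ∧ (j : ℕ) = 2) then -t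
      else 0)
    (hB : ∀ i j : Fin n, B i j =
      if ((i : ℕ) = 0 ∧ (j : ℕ) = 2) ∨ ((i : ℕ) = 3 ∧ (j : ℕ) = 1) then -s
      else if ((i : ℕ) = 2 ∧ (j : ℕ) = 0) ∨ ((i : ℕ) = 1 ∧ (j : ℕ) = 3) then s
      else 0) :
    frobNorm (A * B - B * A) = frobNorm A * frobNorm B := by
  obtain ⟨i0, i1, i2, i3, h0, h1, h2, h3⟩ :
      ∃ a b c d : Fin n, (a : ℕ) = 0 ∧ (b : ℕ) = 1 ∧ (c : ℕ) = 2 ∧ (d : ℕ) = 3 :=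
    ⟨⟨0, by omega⟩, ⟨1, by omega⟩, ⟨2, by omega⟩, ⟨3, by omega⟩, rfl, rfl, rfl, rfl⟩
  -- commutator entries
  have hC : ∀ i j : Fin n, (A * B - B * A) i j =
      if ((i : ℕ) = 0 ∧ (j : ℕ) = 3) ∨ ((i : ℕ) = 1 ∧ (j : ℕ) = 2) then 2 * t * s
      else if ((i : ℕ) = 2 ∧ (j : ℕ) = 1) ∨ ((i : ℕ) = 3 ∧ (j : ℕ) = 0) then -(2 * t * s)
      else 0 := by
    intro i j
    have hrow : ∀ (M N : Matrix (Fin n) (Fin n) ℝ),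
        (∀ a b : Fin n, (b : ℕ) ≠ 0 → (b : ℕ) ≠ 1 → (b : ℕ) ≠ 2 → (b : ℕ) ≠ 3 → M a b = 0) →
        (M * N) i j = M i i0 * N i0 j + M i i1 * N i1 j + M i i2 * N i2 j + M i i3 * N i3 j := by
      intro M N hM
      rw [Matrix.mul_apply]
      refine sum4 _ i0 i1 i2 i3 (by simp [Fin.ext_iff, h0, h1, h2, h3])
        (by simp [Fin.ext_iff, h0, h1, h2, h3]) (by simp [Fin.ext_iff, h0, h1, h2, h3])
        (by simp [Fin.ext_iff, h0, h1, h2, h3]) (by simp [Fin.ext_iff, h0, h1, h2, h3])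
        (by simp [Fin.ext_iff, h0, h1, h2, h3]) ?_
      intro k hk0 hk1 hk2 hk3
      simp only [ne_eq, Fin.ext_iff, h0, h1, h2, h3] at hk0 hk1 hk2 hk3
      rw [hM i k hk0 hk1 hk2 hk3, zero_mul]
    have hAz : ∀ a b : Fin n, (b : ℕ) ≠ 0 → (b : ℕ) ≠ 1 → (b : ℕ) ≠ 2 → (b : ℕ) ≠ 3 →
        A a b = 0 := by
      intro a b hb0 hb1 hb2 hb3
      rw [hA, if_neg (by omega), if_neg (by omega)]
    have hBz : ∀ a b : Fin n, (b : ℕ) ≠ 0 → (b : ℕ) ≠ 1 → (b : ℕ) ≠ 2 → (b : ℕ) ≠ 3 →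
        B a b = 0 := by
      intro a b hb0 hb1 hb2 hb3
      rw [hB, if_neg (by omega), if_neg (by omega)]
    rw [Matrix.sub_apply, hrow A B hAz, hrow B A hBz]
    simp only [hA, hB, h0, h1, h2, h3]
    rcases (show ((i : ℕ) = 0 ∧ ¬(i : ℕ) = 1 ∧ ¬(i : ℕ) = 2 ∧ ¬(i : ℕ) = 3) ∨
        (¬(i : ℕ) = 0 ∧ (i : ℕ) = 1 ∧ ¬(i : ℕ) = 2 ∧ ¬(i : ℕ) = 3) ∨
        (¬(i : ℕ) = 0 ∧ ¬(i : ℕ) = 1 ∧ (i : ℕ) = 2 ∧ ¬(i : ℕ) = 3) ∨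
        (¬(i : ℕ) = 0 ∧ ¬(i : ℕ) = 1 ∧ ¬(i : ℕ) = 2 ∧ (i : ℕ) = 3) ∨
        (¬(i : ℕ) = 0 ∧ ¬(i : ℕ) = 1 ∧ ¬(i : ℕ) = 2 ∧ ¬(i : ℕ) = 3) by omega) with
      ⟨hi1, hi2, hi3, hi4⟩ | ⟨hi1, hi2, hi3, hi4⟩ | ⟨hi1, hi2, hi3, hi4⟩ |
      ⟨hi1, hi2, hi3, hi4⟩ | ⟨hi1, hi2, hi3, hi4⟩ <;>
    rcases (show ((j : ℕ) = 0 ∧ ¬(j : ℕ) = 1 ∧ ¬(j : ℕ) = 2 ∧ ¬(j : ℕ) = 3) ∨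
        (¬(j : ℕ) = 0 ∧ (j : ℕ) = 1 ∧ ¬(j : ℕ) = 2 ∧ ¬(j : ℕ) = 3) ∨
        (¬(j : ℕ) = 0 ∧ ¬(j : ℕ) = 1 ∧ (j : ℕ) = 2 ∧ ¬(j : ℕ) = 3) ∨
        (¬(j : ℕ) = 0 ∧ ¬(j : ℕ) = 1 ∧ ¬(j : ℕ) = 2 ∧ (j : ℕ) = 3) ∨
        (¬(j : ℕ) = 0 ∧ ¬(j : ℕ) = 1 ∧ ¬(j : ℕ) = 2 ∧ ¬(j : ℕ) = 3) by omega) with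
      ⟨hj1, hj2, hj3, hj4⟩ | ⟨hj1, hj2, hj3, hj4⟩ | ⟨hj1, hj2, hj3, hj4⟩ |
      ⟨hj1, hj2, hj3, hj4⟩ | ⟨hj1, hj2, hj3, hj4⟩ <;>
    · simp only [hi1, hi2, hi3, hi4, hj1, hj2, hj3, hj4]
      norm_num
      try ring
  -- trace computations
  have pairs_ne : ∀ (a b c d : Fin n), (a : ℕ) ≠ (c : ℕ) ∨ (b : ℕ) ≠ (d : ℕ) →
      ((a, b) : Fin n × Fin n) ≠ (c, d) := by
    intro a b c d h hEq
    rw [Prod.ext_iff] at hEq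
    rw [Fin.ext_iff, Fin.ext_iff] at hEq
    tauto
  have hTA : Matrix.trace (Aᵀ * A) = 4 * t ^ 2 := by
    rw [trace_eq_sum_sq]
    rw [sum4 _ (i0, i1) (i1, i0) (i2, i3) (i3, i2)
      (pairs_ne _ _ _ _ (by omega)) (pairs_ne _ _ _ _ (by omega))
      (pairs_ne _ _ _ _ (by omega)) (pairs_ne _ _ _ _ (by omega))
      (pairs_ne _ _ _ _ (by omega)) (pairs_ne _ _ _ _ (by omega)) ?_]
    · simp only [hA, h0, h1, h2, h3]
      norm_num
      ring
    · intro p hp1 hp2 hp3 hp4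
      simp only [ne_eq, Prod.ext_iff, Fin.ext_iff, h0, h1, h2, h3, not_and_or]
        at hp1 hp2 hp3 hp4
      rw [hA, if_neg (by omega), if_neg (by omega)]
      norm_num
  have hTB : Matrix.trace (Bᵀ * B) = 4 * s ^ 2 := by
    rw [trace_eq_sum_sq]
    rw [sum4 _ (i0, i2) (i2, i0) (i3, i1) (i1, i3)
      (pairs_ne _ _ _ _ (by omega)) (pairs_ne _ _ _ _ (by omega))
      (pairs_ne _ _ _ _ (by omega)) (pairs_ne _ _ _ _ (by omega))
      (pairs_ne _ _ _ _ (by omega)) (pairs_ne _ _ _ _ (by omega)) ?_]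
    · simp only [hB, h0, h1, h2, h3]
      norm_num
      ring
    · intro p hp1 hp2 hp3 hp4
      simp only [ne_eq, Prod.ext_iff, Fin.ext_iff, h0, h1, h2, h3, not_and_or]
        at hp1 hp2 hp3 hp4
      rw [hB, if_neg (by omega), if_neg (by omega)]
      norm_num
  have hTC : Matrix.trace ((A * B - B * A)ᵀ * (A * B - B * A)) = 16 * t ^ 2 * s ^ 2 := by
    rw [trace_eq_sum_sq]
    rw [sum4 _ (i0, i3) (i1, i2) (i2, i1) (i3, i0)
      (pairs_ne _ _ _ _ (by omega)) (pairs_ne _ _ _ _ (by omega))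
      (pairs_ne _ _ _ _ (by omega)) (pairs_ne _ _ _ _ (by omega))
      (pairs_ne _ _ _ _ (by omega)) (pairs_ne _ _ _ _ (by omega)) ?_]
    · simp only [hC, h0, h1, h2, h3]
      norm_num
      ring
    · intro p hp1 hp2 hp3 hp4
      simp only [ne_eq, Prod.ext_iff, Fin.ext_iff, h0, h1, h2, h3, not_and_or]
        at hp1 hp2 hp3 hp4
      rw [hC, if_neg (by omega), if_neg (by omega)]
      norm_num
  unfold frobNorm
  rw [hTA, hTB, hTC, ← Real.sqrt_mul (by positivity)]
  congr 1
  ring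
end

section
/- Let $A$ and $B$ be real skew-symmetric $3 \times 3$ matrices. Then $\|AB - BA\|_F \leq \tfrac{1}{\sqrt{2}} \|A\|_F \, \|B\|_F$. (Equivalently, in the inner product $\langle M,N\rangle = -\tfrac12\operatorname{tr}(MN)$, $|[A,B]| \leq |A|\,|B|$, i.e. $\gamma_0(\mathfrak{so}(3)) \leq 1$.) -/
set_option maxHeartbeats 1000000

open Matrix

/-- The `𝔰𝔬(3)` case of the Bourguignon–Lawson commutator estimate:
`‖AB - BA‖_F ≤ (1/√2) ‖A‖_F ‖B‖_F`, i.e. `γ₀(𝔰𝔬(3)) ≤ 1`. -/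
theorem so3_commutator_frobenius_le
    (A B : Matrix (Fin 3) (Fin 3) ℝ) (hA : Aᵀ = -A) (hB : Bᵀ = -B) :
    frobNorm (A * B - B * A) ≤ (1 / Real.sqrt 2) * (frobNorm A * frobNorm B) := by
  have ha : ∀ i j, A j i = -A i j := fun i j => congrFun (congrFun hA i) j
  have hb : ∀ i j, B j i = -B i j := fun i j => congrFun (congrFun hB i) j
  have ha00 : A 0 0 = 0 := by linarith [ha 0 0]
  have ha11 : A 1 1 = 0 := by linarith [ha 1 1]
  have ha22 : A 2 2 = 0 := by linarith [ha 2 2]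
  have hb00 : B 0 0 = 0 := by linarith [hb 0 0]
  have hb11 : B 1 1 = 0 := by linarith [hb 1 1]
  have hb22 : B 2 2 = 0 := by linarith [hb 2 2]
  have ha10 := ha 0 1; have ha20 := ha 0 2; have ha21 := ha 1 2
  have hb10 := hb 0 1; have hb20 := hb 0 2; have hb21 := hb 1 2
  have hL : (0:ℝ) ≤ Matrix.trace ((A * B - B * A)ᵀ * (A * B - B * A)) := by
    simp only [Matrix.trace, Matrix.diag, Matrix.mul_apply, Matrix.transpose_apply,
      Matrix.sub_apply, Fin.sum_univ_three]
    simp only [← sq]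
    positivity
  have hAn : (0:ℝ) ≤ Matrix.trace (Aᵀ * A) := by
    simp only [Matrix.trace, Matrix.diag, Matrix.mul_apply, Matrix.transpose_apply,
      Fin.sum_univ_three]
    ring_nf
    positivity
  have hBn : (0:ℝ) ≤ Matrix.trace (Bᵀ * B) := by
    simp only [Matrix.trace, Matrix.diag, Matrix.mul_apply, Matrix.transpose_apply,
      Fin.sum_univ_three]
    ring_nf
    positivity
  have key : Matrix.trace ((A * B - B * A)ᵀ * (A * B - B * A)) * 2
      ≤ Matrix.trace (Aᵀ * A) * Matrix.trace (Bᵀ * B) := by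
    simp only [Matrix.trace, Matrix.diag, Matrix.mul_apply, Matrix.transpose_apply,
      Matrix.sub_apply, Fin.sum_univ_three]
    rw [ha00, ha10, ha20, ha11, ha21, ha22, hb00, hb10, hb20, hb11, hb21, hb22]
    nlinarith [sq_nonneg (A 0 1 * B 0 1 + A 0 2 * B 0 2 + A 1 2 * B 1 2)]
  have h2 : (0:ℝ) < Real.sqrt 2 := Real.sqrt_pos.mpr (by norm_num)
  unfold frobNorm
  rw [one_div, inv_mul_eq_div, le_div_iff₀ h2, ← Real.sqrt_mul hL,
    ← Real.sqrt_mul hAn]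
  exact Real.sqrt_le_sqrt key
end

section
/- There exist nonzero real skew-symmetric $3 \times 3$ matrices $A$ and $B$ with $\|AB - BA\|_F = \tfrac{1}{\sqrt{2}} \|A\|_F \, \|B\|_F$; for instance $A = E_{12} - E_{21}$ and $B = E_{13} - E_{31}$ (where $E_{ij}$ is the matrix with a single $1$ in entry $(i,j)$) satisfy this equality. Hence the constant $\tfrac{1}{\sqrt{2}}$ is sharp, i.e. $\gamma_0(\mathfrak{so}(3)) = 1$ in the normalization $\langle M,N\rangle = -\tfrac12\operatorname{tr}(MN)$. -/
open Matrix

/-!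
`A = E₁₂ - E₂₁` and `B = E₁₃ - E₃₁` are two of the standard generators of `𝔰𝔬(3)`; their
commutator is the third generator `E₃₂ - E₂₃`. Every generator `Eᵢⱼ - Eⱼᵢ` has Frobenius norm `√2`,
so the equality reads `√2 = (1/√2) · √2 · √2`.
-/

namespace Matrix

variable {n R : Type*} [DecidableEq n]

def skewSingle [Zero R] [One R] [Sub R] (i j : n) : Matrix n n R :=
  single i j 1 - single j i 1

section Ring

variable [Ring R]

lemma transpose_skewSingle (i j : n) : (skewSingle i j : Matrix n n R)ᵀ = -skewSingle i j := by
  simp [skewSingle, transpose_single]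

lemma skewSingle_ne_zero [Nontrivial R] {i j : n} (h : i ≠ j) :
    (skewSingle i j : Matrix n n R) ≠ 0 := fun h0 => by
  simpa [skewSingle, single_apply_of_ne, h, h.symm] using congrFun (congrFun h0 i) j

variable [Fintype n]

lemma skewSingle_mul_self {i j : n} (h : i ≠ j) :
    (skewSingle i j : Matrix n n R) * skewSingle i j = -(single i i 1 + single j j 1) := by
  simp only [skewSingle, mul_sub, sub_mul, single_mul_single_same, mul_one,
    single_mul_single_of_ne, ne_eq, h, h.symm, not_false_eq_true]
  abel

lemma skewSingle_commutator {i j k : n} (hij : i ≠ j) (hik : i ≠ k) (hjk : j ≠ k) :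
    (skewSingle i j : Matrix n n R) * skewSingle i k - skewSingle i k * skewSingle i j =
      skewSingle k j := by
  simp only [skewSingle, mul_sub, sub_mul, single_mul_single_same, mul_one,
    single_mul_single_of_ne, ne_eq, hij, hik, hjk, hij.symm, hik.symm, hjk.symm,
    not_false_eq_true]
  abel

lemma trace_transpose_skewSingle_mul_self {i j : n} (h : i ≠ j) :
    trace ((skewSingle i j : Matrix n n R)ᵀ * skewSingle i j) = 2 := by
  rw [transpose_skewSingle, neg_mul, skewSingle_mul_self h, neg_neg, trace_add,
    trace_single_eq_same, trace_single_eq_same, one_add_one_eq_two]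

end Ring

end Matrix

lemma frobNorm_skewSingle {n : ℕ} {i j : Fin n} (h : i ≠ j) :
    frobNorm (skewSingle i j) = √2 := by
  rw [frobNorm, trace_transpose_skewSingle_mul_self h]

/-- Sharpness of the `𝔰𝔬(3)` Bourguignon–Lawson commutator estimate:
`A = E₁₂ - E₂₁` and `B = E₁₃ - E₃₁` are nonzero skew-symmetric matrices
achieving `‖AB - BA‖_F = (1/√2) ‖A‖_F ‖B‖_F`, so `γ₀(𝔰𝔬(3)) = 1`. -/
theorem so3_commutator_frobenius_sharp :
    ∃ A B : Matrix (Fin 3) (Fin 3) ℝ,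
      A ≠ 0 ∧ B ≠ 0 ∧ Aᵀ = -A ∧ Bᵀ = -B ∧
      A = !![0, 1, 0; -1, 0, 0; 0, 0, 0] ∧
      B = !![0, 0, 1; 0, 0, 0; -1, 0, 0] ∧
      frobNorm (A * B - B * A) = (1 / Real.sqrt 2) * (frobNorm A * frobNorm B) := by
  refine ⟨skewSingle 0 1, skewSingle 0 2, skewSingle_ne_zero (by decide),
    skewSingle_ne_zero (by decide), transpose_skewSingle 0 1, transpose_skewSingle 0 2,
    ?_, ?_, ?_⟩
  · ext i j; fin_cases i <;> fin_cases j <;> simp [skewSingle]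
  · ext i j; fin_cases i <;> fin_cases j <;> simp [skewSingle]
  · rw [skewSingle_commutator (by decide) (by decide) (by decide),
      frobNorm_skewSingle (by decide), frobNorm_skewSingle (by decide),
      frobNorm_skewSingle (by decide)]
    field_simp
end

section
/- Let $T$ be a real symmetric $3 \times 3$ matrix with $\operatorname{tr}(T) = 0$. Then for every $v \in \mathbb{R}^3$, $|\langle Tv, v\rangle| \leq \sqrt{2/3}\, \|T\|_F \, \|v\|^2$. -/
open Matrix

/-!
For trace-free `T` the quadratic form `⟨Tv, v⟩ = tr (Tᵀ (v vᵀ))` only sees the trace-free part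
`P = v vᵀ - (‖v‖² / n) I` of `v vᵀ`. Cauchy–Schwarz for the Frobenius pairing gives
`|⟨Tv, v⟩| ≤ ‖T‖_F ‖P‖_F`, and `‖P‖_F² = (1 - 1/n) ‖v‖⁴`; for `n = 3` this is `√(2/3)`.
-/

namespace Matrix

variable {m n : Type*} [Fintype m] [Fintype n]

theorem trace_transpose_mul_eq_sum (A B : Matrix m n ℝ) :
    trace (Aᵀ * B) = ∑ i, ∑ j, A i j * B i j := by
  rw [trace, Finset.sum_comm]
  simp [mul_apply]

theorem trace_transpose_mul_sq_le (A B : Matrix m n ℝ) :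
    trace (Aᵀ * B) ^ 2 ≤ trace (Aᵀ * A) * trace (Bᵀ * B) := by
  simp only [trace_transpose_mul_eq_sum, ← sq, ← Fintype.sum_prod_type']
  exact Finset.sum_mul_sq_le_sq_mul_sq _ _ _

theorem trace_transpose_mul_self_nonneg (A : Matrix m n ℝ) : 0 ≤ trace (Aᵀ * A) := by
  rw [trace_transpose_mul_eq_sum]
  exact Finset.sum_nonneg fun i _ => Finset.sum_nonneg fun j _ => mul_self_nonneg _

variable [DecidableEq n]

noncomputable def tracelessVecMulVec (v : n → ℝ) : Matrix n n ℝ :=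
  vecMulVec v v - (v ⬝ᵥ v / Fintype.card n) • 1

theorem dotProduct_mulVec_self_eq_trace {T : Matrix n n ℝ} (htr : trace T = 0) (v : n → ℝ) :
    T *ᵥ v ⬝ᵥ v = trace (Tᵀ * tracelessVecMulVec v) := by
  rw [tracelessVecMulVec, Matrix.mul_sub, trace_sub, Matrix.mul_smul, Matrix.mul_one,
    trace_smul, trace_transpose, htr, smul_zero, sub_zero, trace_transpose_mul_eq_sum]
  simp only [mulVec, dotProduct, vecMulVec_apply, Finset.sum_mul]
  exact Finset.sum_congr rfl fun i _ => Finset.sum_congr rfl fun j _ => by ring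

theorem trace_transpose_mul_self_tracelessVecMulVec (v : n → ℝ) :
    trace ((tracelessVecMulVec v)ᵀ * tracelessVecMulVec v)
      = (Fintype.card n - 1) / Fintype.card n * (v ⬝ᵥ v) ^ 2 := by
  rcases isEmpty_or_nonempty n with _ | _
  · simp [trace]
  have hN : (Fintype.card n : ℝ) ≠ 0 := Nat.cast_ne_zero.2 Fintype.card_ne_zero
  simp only [tracelessVecMulVec, transpose_sub, transpose_vecMulVec, transpose_smul,
    transpose_one, sub_mul, mul_sub, Matrix.smul_mul, Matrix.mul_smul, Matrix.one_mul,
    Matrix.mul_one, vecMulVec_mul_vecMulVec, trace_sub, trace_smul, trace_vecMulVec, trace_one,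
    vecMulVec_smul, smul_eq_mul]
  field_simp
  ring

theorem abs_dotProduct_mulVec_self_le {T : Matrix n n ℝ} (htr : trace T = 0) (v : n → ℝ) :
    |T *ᵥ v ⬝ᵥ v| ≤
      √((Fintype.card n - 1) / Fintype.card n) * √(trace (Tᵀ * T)) * (v ⬝ᵥ v) := by
  have hv : 0 ≤ v ⬝ᵥ v := Finset.sum_nonneg fun i _ => mul_self_nonneg (v i)
  calc |T *ᵥ v ⬝ᵥ v|
      ≤ √(trace (Tᵀ * T) * trace ((tracelessVecMulVec v)ᵀ * tracelessVecMulVec v)) := by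
        rw [dotProduct_mulVec_self_eq_trace htr]
        exact Real.abs_le_sqrt (trace_transpose_mul_sq_le _ _)
    _ = √((Fintype.card n - 1) / Fintype.card n) * √(trace (Tᵀ * T)) * (v ⬝ᵥ v) := by
        rw [trace_transpose_mul_self_tracelessVecMulVec,
          Real.sqrt_mul (trace_transpose_mul_self_nonneg T), Real.sqrt_mul' _ (sq_nonneg _),
          Real.sqrt_sq hv]
        ring

end Matrix

theorem traceless_symmetric_quadratic_form_le_general
    (T : Matrix (Fin 3) (Fin 3) ℝ) (htr : Matrix.trace T = 0)
    (v : Fin 3 → ℝ) :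
    |dotProduct (T.mulVec v) v| ≤
      Real.sqrt (2 / 3) * frobNorm T * dotProduct v v := by
  have h := abs_dotProduct_mulVec_self_le htr v
  rwa [Fintype.card_fin, show ((3 : ℕ) - 1 : ℝ) / (3 : ℕ) = 2 / 3 by norm_num] at h

/-- Sharp estimate for a trace-free symmetric endomorphism of a rank-3 space
(Lemma 2.2 of the paper): `|⟨Tv, v⟩| ≤ √(2/3) ‖T‖_F ‖v‖²`. -/
theorem traceless_symmetric_quadratic_form_le
    (T : Matrix (Fin 3) (Fin 3) ℝ) (hT : Tᵀ = T) (htr : Matrix.trace T = 0)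
    (v : Fin 3 → ℝ) :
    |dotProduct (T.mulVec v) v| ≤
      Real.sqrt (2 / 3) * frobNorm T * dotProduct v v :=
  traceless_symmetric_quadratic_form_le_general T htr v
end

section
/- Let $T$ be a real symmetric $3 \times 3$ matrix with $\operatorname{tr}(T) = 0$, let $V$ be a real inner product space, and let $v_1, v_2, v_3 \in V$. Then $\big| \sum_{i,j=1}^{3} T_{ij} \langle v_i, v_j \rangle \big| \leq \sqrt{2/3}\, \|T\|_F \sum_{i=1}^{3} \|v_i\|^2$. -/
open Matrix

/-!
Write `G` for the Gram matrix `⟪v i, v j⟫` and `S = tr G = ∑ ‖v i‖²`. Since `T` is trace-free,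
its pairing with `G` does not change when `G` is replaced by its trace-free part
`G₀ = G - (S / n) • 1`, so Cauchy–Schwarz for the Frobenius pairing bounds it by `‖T‖_F ‖G₀‖_F`.
Finally `‖G₀‖_F² = ‖G‖_F² - S² / n ≤ (1 - 1 / n) S²`, because `|G i j| ≤ ‖v i‖ ‖v j‖`
gives `‖G‖_F ≤ S`.
-/

open Finset

section TraceFreePart

variable {ι : Type*} [Fintype ι] [DecidableEq ι]

lemma sum_mul_sub_smul_one_of_trace_eq_zero {T : Matrix ι ι ℝ} (htr : trace T = 0)
    (G : Matrix ι ι ℝ) (c : ℝ) :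
    ∑ i, ∑ j, T i j * (G - c • 1) i j = ∑ i, ∑ j, T i j * G i j := by
  have hdiag : ∑ i, ∑ j, T i j * (c • 1 : Matrix ι ι ℝ) i j = c * trace T := by
    simp [one_apply, trace, mul_sum, mul_comm]
  simp only [Matrix.sub_apply, mul_sub, sum_sub_distrib, hdiag, htr, mul_zero, sub_zero]

lemma sum_sq_sub_smul_one (G : Matrix ι ι ℝ) (c : ℝ) :
    ∑ i, ∑ j, (G - c • 1) i j ^ 2 =
      ∑ i, ∑ j, G i j ^ 2 - 2 * c * trace G + c ^ 2 * Fintype.card ι := by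
  have h : ∀ i j, (G - c • 1) i j ^ 2 =
      G i j ^ 2 - 2 * c * (if i = j then G i j else 0) + (if i = j then c ^ 2 else 0) := by
    intro i j
    by_cases hij : i = j <;> simp [hij, one_apply]; ring
  simp only [h, sum_add_distrib, sum_sub_distrib, ← mul_sum, sum_ite_eq, mem_univ, if_true,
    trace, diag_apply, sum_const, card_univ, nsmul_eq_mul]
  ring

end TraceFreePart

lemma frobNorm_eq_sqrt_sum_sq {n : ℕ} (M : Matrix (Fin n) (Fin n) ℝ) :
    frobNorm M = √(∑ i, ∑ j, M i j ^ 2) := by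
  rw [frobNorm, trace, sum_comm]
  simp only [diag_apply, mul_apply, transpose_apply, sq]

lemma abs_sum_mul_le_frobNorm_mul {n : ℕ} (A B : Matrix (Fin n) (Fin n) ℝ) :
    |∑ i, ∑ j, A i j * B i j| ≤ frobNorm A * frobNorm B := by
  rw [frobNorm_eq_sqrt_sum_sq, frobNorm_eq_sqrt_sum_sq, ← Real.sqrt_mul (by positivity)]
  refine Real.abs_le_sqrt ?_
  simpa only [Fintype.sum_prod_type] using
    sum_mul_sq_le_sq_mul_sq univ (fun p : Fin n × Fin n ↦ A p.1 p.2) (fun p ↦ B p.1 p.2)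

section Gram

variable {V : Type*} [NormedAddCommGroup V] [InnerProductSpace ℝ V]

lemma trace_gram {ι : Type*} [Fintype ι] (v : ι → V) :
    trace (gram ℝ v) = ∑ i, ‖v i‖ ^ 2 := by
  simp [trace, gram_apply]

lemma sum_sq_inner_le_sq_sum_norm_sq {ι : Type*} [Fintype ι] (v : ι → V) :
    ∑ i, ∑ j, inner ℝ (v i) (v j) ^ 2 ≤ (∑ i, ‖v i‖ ^ 2) ^ 2 := by
  rw [sq (∑ i, _), sum_mul_sum]
  gcongr with i _ j _
  rw [← sq_abs, ← mul_pow]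
  gcongr
  exact abs_real_inner_le_norm _ _

lemma frobNorm_gram_sub_smul_one_le {n : ℕ} [NeZero n] (v : Fin n → V) :
    frobNorm (gram ℝ v - ((∑ i, ‖v i‖ ^ 2) / n) • 1) ≤ √((n - 1) / n) * ∑ i, ‖v i‖ ^ 2 := by
  have hn : (0 : ℝ) < n := by simp [Nat.pos_of_neZero n]
  have hS : 0 ≤ ∑ i, ‖v i‖ ^ 2 := by positivity
  have hGS := sum_sq_inner_le_sq_sum_norm_sq v
  rw [frobNorm_eq_sqrt_sum_sq, sum_sq_sub_smul_one, trace_gram, Fintype.card_fin,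
    ← Real.sqrt_sq hS, ← Real.sqrt_mul' _ (sq_nonneg _), Real.sqrt_sq hS]
  gcongr
  simp only [gram_apply]
  field_simp
  nlinarith

theorem abs_sum_mul_inner_le_of_trace_eq_zero {n : ℕ} [NeZero n]
    {T : Matrix (Fin n) (Fin n) ℝ} (htr : trace T = 0) (v : Fin n → V) :
    |∑ i, ∑ j, T i j * inner ℝ (v i) (v j)| ≤
      √((n - 1) / n) * frobNorm T * ∑ i, ‖v i‖ ^ 2 := by
  calc |∑ i, ∑ j, T i j * inner ℝ (v i) (v j)|
      = |∑ i, ∑ j, T i j * (gram ℝ v - ((∑ i, ‖v i‖ ^ 2) / n) • 1) i j| := by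
        rw [sum_mul_sub_smul_one_of_trace_eq_zero htr]; rfl
    _ ≤ frobNorm T * frobNorm (gram ℝ v - ((∑ i, ‖v i‖ ^ 2) / n) • 1) :=
        abs_sum_mul_le_frobNorm_mul _ _
    _ ≤ frobNorm T * (√((n - 1) / n) * ∑ i, ‖v i‖ ^ 2) := by
        gcongr
        · exact Real.sqrt_nonneg _
        · exact frobNorm_gram_sub_smul_one_le v
    _ = √((n - 1) / n) * frobNorm T * ∑ i, ‖v i‖ ^ 2 := by ring

end Gram

theorem traceless_symmetric_bilinear_le_general
    (T : Matrix (Fin 3) (Fin 3) ℝ) (htr : Matrix.trace T = 0)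
    (V : Type*) [NormedAddCommGroup V] [InnerProductSpace ℝ V]
    (v : Fin 3 → V) :
    |∑ i : Fin 3, ∑ j : Fin 3, T i j * (inner ℝ (v i) (v j) : ℝ)| ≤
      Real.sqrt (2 / 3) * frobNorm T * ∑ i : Fin 3, ‖v i‖ ^ 2 := by
  convert abs_sum_mul_inner_le_of_trace_eq_zero htr v using 4
  norm_num

/-- Lemma 2.2 of the paper: for a trace-free symmetric `3 × 3` matrix `T` and
vectors `v₁, v₂, v₃` in a real inner product space,
`|∑ T i j ⟪v i, v j⟫| ≤ √(2/3) ‖T‖_F ∑ ‖v i‖²`. -/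
theorem traceless_symmetric_bilinear_le
    (T : Matrix (Fin 3) (Fin 3) ℝ) (hT : Tᵀ = T) (htr : Matrix.trace T = 0)
    (V : Type*) [NormedAddCommGroup V] [InnerProductSpace ℝ V]
    (v : Fin 3 → V) :
    |∑ i : Fin 3, ∑ j : Fin 3, T i j * (inner ℝ (v i) (v j) : ℝ)| ≤
      Real.sqrt (2 / 3) * frobNorm T * ∑ i : Fin 3, ‖v i‖ ^ 2 :=
  traceless_symmetric_bilinear_le_general T htr V v
end

section
/- Call a real antisymmetric $4 \times 4$ matrix $\omega$ (so $\omega_{ij} = -\omega_{ji}$) self-dual if $\omega_{12} = \omega_{34}$, $\omega_{13} = \omega_{42}$, and $\omega_{14} = \omega_{23}$; the self-dual matrices form a 3-dimensional subspace of the antisymmetric matrices, equipped with the inner product $\langle P, Q \rangle = \sum_{i,j=1}^4 P_{ij} Q_{ij}$. For self-dual $\eta, \mu$ define $(\eta \circ \mu)_{ij} = \sum_{k=1}^4 ( \eta_{ik}\mu_{jk} - \eta_{jk}\mu_{ik})$. Then if $\{e_1, e_2, e_3\}$ is an orthonormal basis of the space of self-dual matrices, the set $\{e_1 \circ e_2,\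 e_1 \circ e_3,\ e_2 \circ e_3\}$ is again an orthonormal basis of the space of self-dual matrices. -/
open Matrix

/-- A real antisymmetric `4 × 4` matrix is self-dual if `ω₁₂ = ω₃₄`,
`ω₁₃ = ω₄₂`, `ω₁₄ = ω₂₃` (indices here `0`-based). -/
def IsSelfDual (ω : Matrix (Fin 4) (Fin 4) ℝ) : Prop :=
  ωᵀ = -ω ∧ ω 0 1 = ω 2 3 ∧ ω 0 2 = ω 3 1 ∧ ω 0 3 = ω 1 2

/-- The inner product `⟨P, Q⟩ = ∑ᵢⱼ Pᵢⱼ Qᵢⱼ` on `4 × 4` matrices (two-forms). -/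
def formInner (P Q : Matrix (Fin 4) (Fin 4) ℝ) : ℝ :=
  ∑ i : Fin 4, ∑ j : Fin 4, P i j * Q i j

/-- The product `(η ∘ μ)ᵢⱼ = ∑ₖ (ηᵢₖ μⱼₖ - ηⱼₖ μᵢₖ)`. -/
def circProd (η μ : Matrix (Fin 4) (Fin 4) ℝ) : Matrix (Fin 4) (Fin 4) ℝ :=
  Matrix.of fun i j => ∑ k : Fin 4, (η i k * μ j k - η j k * μ i k)

lemma sd_entries {η : Matrix (Fin 4) (Fin 4) ℝ} (h : IsSelfDual η) :
    η 0 0 = 0 ∧ η 1 1 = 0 ∧ η 2 2 = 0 ∧ η 3 3 = 0 ∧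
    η 1 0 = -η 0 1 ∧ η 2 0 = -η 0 2 ∧ η 3 0 = -η 0 3 ∧
    η 2 1 = -η 0 3 ∧ η 3 1 = η 0 2 ∧ η 3 2 = -η 0 1 ∧
    η 2 3 = η 0 1 ∧ η 1 3 = -η 0 2 ∧ η 1 2 = η 0 3 := by
  obtain ⟨hT, h1, h2, h3⟩ := h
  have H : ∀ i j, η j i = -η i j := by
    intro i j
    have := congrFun (congrFun hT i) j
    simpa using this
  refine ⟨?_, ?_, ?_, ?_, ?_, ?_, ?_, ?_, ?_, ?_, ?_, ?_, ?_⟩ <;>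
    [ (linarith [H 0 0]); (linarith [H 1 1]); (linarith [H 2 2]); (linarith [H 3 3]);
      (exact H 0 1); (exact H 0 2); (exact H 0 3);
      (linarith [H 1 2]); linarith; (linarith [H 2 3]); linarith;
      (linarith [H 3 1]); linarith ]

lemma circ_selfdual {η μ : Matrix (Fin 4) (Fin 4) ℝ}
    (h1 : IsSelfDual η) (h2 : IsSelfDual μ) : IsSelfDual (circProd η μ) := by
  obtain ⟨a1, a2, a3, a4, a5, a6, a7, a8, a9, a10, a11, a12, a13⟩ := sd_entries h1
  obtain ⟨b1, b2, b3, b4, b5, b6, b7, b8, b9, b10, b11, b12, b13⟩ := sd_entries h2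
  refine ⟨?_, ?_, ?_, ?_⟩
  · ext i j
    simp only [circProd, Matrix.transpose_apply, Matrix.neg_apply, Matrix.of_apply,
      Fin.sum_univ_four]
    ring
  all_goals
    simp only [circProd, Matrix.of_apply, Fin.sum_univ_four,
      a1, a2, a3, a4, a5, a6, a7, a8, a9, a10, a11, a12, a13,
      b1, b2, b3, b4, b5, b6, b7, b8, b9, b10, b11, b12, b13]
    ring

lemma circ_inner {η μ η' μ' : Matrix (Fin 4) (Fin 4) ℝ}
    (h1 : IsSelfDual η) (h2 : IsSelfDual μ) (h3 : IsSelfDual η') (h4 : IsSelfDual μ') :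
    formInner (circProd η μ) (circProd η' μ') =
      formInner η η' * formInner μ μ' - formInner η μ' * formInner μ η' := by
  obtain ⟨a1, a2, a3, a4, a5, a6, a7, a8, a9, a10, a11, a12, a13⟩ := sd_entries h1
  obtain ⟨b1, b2, b3, b4, b5, b6, b7, b8, b9, b10, b11, b12, b13⟩ := sd_entries h2
  obtain ⟨c1, c2, c3, c4, c5, c6, c7, c8, c9, c10, c11, c12, c13⟩ := sd_entries h3
  obtain ⟨d1, d2, d3, d4, d5, d6, d7, d8, d9, d10, d11, d12, d13⟩ := sd_entries h4
  simp only [formInner, circProd, Matrix.of_apply, Fin.sum_univ_four,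
    a1, a2, a3, a4, a5, a6, a7, a8, a9, a10, a11, a12, a13,
    b1, b2, b3, b4, b5, b6, b7, b8, b9, b10, b11, b12, b13,
    c1, c2, c3, c4, c5, c6, c7, c8, c9, c10, c11, c12, c13,
    d1, d2, d3, d4, d5, d6, d7, d8, d9, d10, d11, d12, d13]
  ring

/-- Lemma 2.5 of the paper: if `{e₁, e₂, e₃}` is an orthonormal basis of the
space of self-dual two-forms on `ℝ⁴`, then `{e₁∘e₂, e₁∘e₃, e₂∘e₃}` is again an
orthonormal basis of the space of self-dual two-forms. -/
theorem circ_orthonormal_basis (e : Fin 3 → Matrix (Fin 4) (Fin 4) ℝ)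
    (hsd : ∀ a, IsSelfDual (e a))
    (hON : ∀ a b, formInner (e a) (e b) = if a = b then 1 else 0) :
    (∀ a, IsSelfDual (![circProd (e 0) (e 1), circProd (e 0) (e 2),
        circProd (e 1) (e 2)] a)) ∧
    (∀ a b, formInner (![circProd (e 0) (e 1), circProd (e 0) (e 2),
        circProd (e 1) (e 2)] a)
        (![circProd (e 0) (e 1), circProd (e 0) (e 2), circProd (e 1) (e 2)] b) =
        if a = b then 1 else 0) := by
  constructor
  · intro a
    fin_cases a
    · exact circ_selfdual (hsd 0) (hsd 1)
    · exact circ_selfdual (hsd 0) (hsd 2)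
    · exact circ_selfdual (hsd 1) (hsd 2)
  · intro a b
    fin_cases a <;> fin_cases b <;>
      simp [hON]
    all_goals (rw [circ_inner (hsd _) (hsd _) (hsd _) (hsd _)]; simp [hON])
end
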